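/- For all reals c1, c2 > 0 there exists a constant C > 0, depending only on c1 and c2, such that the following holds. For every integer K ≥ 2, every real ε > 0, all reals Δ_1, …, Δ_K with Δ_1 = 0 and Δ_j ≥ Δ_min > 0 for every j ≥ 2, and every p : ℕ × {1,…,K} → [0,1] satisfying (i) ∑_{j=1}^{K} p(r, j) ≤ 1 for every r ∈ ℕ, and (ii) p(r, j) ≤ c1·exp(−2^{r+1}·Δ_j²/c2) for every r ∈ ℕ and every j ≥ 2 with Δ_j ≤ ε, one has ∑_{j ≥ 2, Δ_j ≤ ε} Δ_j · ∑_{r=1}^{∞} 2^{r−1}·p(r−1, j) ≤ C·(log K + 1)/Δ_min. -/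

import Mathlib

/-!
Sort the actions into dyadic buckets `Δmin * 2 ^ l ≤ Δ j < Δmin * 2 ^ (l + 1)`. In a bucket of
gaps in `[a, 2a]` the selection probabilities at epoch `r` sum to at most
`min 1 (exp (L - 2 ^ r * b))` with `b = 2 a² / c2` and `L = log (K * max c1 1)`: by hypothesis (i)
and by the tail bound (ii) summed over at most `K` actions. With `y = 2 ^ r * b`, the term
`y * min 1 (exp (L - y))` is at most `min y (T² / y)` for `T = 2 L + 4`, and along a geometric
sequence `y` these minima sum to at most `4 T`: below `T` the sum is dominated by its last term,
above `T` by its first. So bucket `l` contributes `O(c2 (L + 1) / (Δmin * 2 ^ l))`, and the buckets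
together at most twice the first.
-/

open scoped Classical

open Finset Real

lemma exists_le_two_pow_mul_and_sum_two_pow_mul_le {a b : ℝ} (ha : 0 < a) (hb : 0 < b) :
    ∃ R : ℕ, a ≤ 2 ^ R * b ∧ ∑ r ∈ range R, 2 ^ r * b ≤ 2 * a := by
  by_cases hab : a ≤ b
  · exact ⟨0, by simpa using hab, by simpa using ha.le⟩
  obtain ⟨n, hn, hn'⟩ :=
    exists_nat_pow_near ((one_le_div hb).2 (not_le.1 hab).le) (one_lt_two : (1 : ℝ) < 2)
  refine ⟨n + 1, ((div_lt_iff₀ hb).1 hn').le, ?_⟩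
  have := (le_div_iff₀ hb).1 hn
  rw [← sum_mul, geom_sum_eq (by norm_num : (2 : ℝ) ≠ 1), pow_succ]
  nlinarith

lemma summable_min_two_pow_mul {a b : ℝ} (hb : 0 < b) :
    Summable fun r : ℕ => min (2 ^ r * b) (a ^ 2 / (2 ^ r * b)) := by
  refine Summable.of_nonneg_of_le (fun r => le_min (by positivity) (by positivity))
    (fun r => ?_) (summable_geometric_two.mul_left (a ^ 2 / b))
  calc min (2 ^ r * b) (a ^ 2 / (2 ^ r * b)) ≤ a ^ 2 / (2 ^ r * b) := min_le_right _ _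
    _ = a ^ 2 / b * (1 / 2) ^ r := by rw [one_div, inv_pow]; field_simp

lemma tsum_min_two_pow_mul_le {a b : ℝ} (ha : 0 < a) (hb : 0 < b) :
    ∑' r : ℕ, min (2 ^ r * b) (a ^ 2 / (2 ^ r * b)) ≤ 4 * a := by
  obtain ⟨R, haR, hhead⟩ := exists_le_two_pow_mul_and_sum_two_pow_mul_le ha hb
  have hs := summable_min_two_pow_mul (a := a) hb
  have htail (m : ℕ) :
      min (2 ^ (m + R) * b) (a ^ 2 / (2 ^ (m + R) * b)) ≤ a * (1 / 2) ^ m :=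
    calc _ ≤ a ^ 2 / (2 ^ (m + R) * b) := min_le_right _ _
      _ = a ^ 2 / (2 ^ m * (2 ^ R * b)) := by ring
      _ ≤ a ^ 2 / (2 ^ m * a) := by gcongr
      _ = a * (1 / 2) ^ m := by rw [one_div, inv_pow]; field_simp
  rw [← hs.sum_add_tsum_nat_add R]
  calc _ ≤ ∑ r ∈ range R, 2 ^ r * b + ∑' m : ℕ, a * (1 / 2) ^ m :=
        add_le_add (sum_le_sum fun r _ => min_le_left _ _)
          (Summable.tsum_le_tsum htail ((summable_nat_add_iff R).2 hs)
            (summable_geometric_two.mul_left a))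
    _ ≤ 4 * a := by rw [tsum_mul_left, tsum_geometric_two]; linarith

lemma mul_min_one_exp_sub_le {L y : ℝ} (hL : 0 ≤ L) (hy : 0 < y) :
    y * min 1 (exp (L - y)) ≤ min y ((2 * L + 4) ^ 2 / y) := by
  have hle : y * min 1 (exp (L - y)) ≤ y := mul_le_of_le_one_right hy.le (min_le_left _ _)
  refine le_min hle ?_
  rw [le_div_iff₀ hy]
  rcases le_or_gt y (2 * L + 4) with hyT | hTy
  · nlinarith
  -- once `y > 2 L`, `exp (L - y) ≤ exp (-y / 2)`, and `y ^ 2 ≤ 8 exp (y / 2)`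
  have hsq : (y / 2) ^ 2 / 2 ≤ exp (y / 2) := by
    simpa using pow_div_factorial_le_exp (y / 2) (by positivity) 2
  have hdecay : exp (L - y) * exp (y / 2) ≤ 1 := by
    rw [← exp_add, exp_le_one_iff]; linarith
  calc y * min 1 (exp (L - y)) * y ≤ y ^ 2 * exp (L - y) := by
        rw [mul_right_comm, ← sq]; gcongr; exact min_le_right _ _
    _ ≤ 8 * exp (y / 2) * exp (L - y) := by gcongr; linarith
    _ ≤ 8 := by nlinarith
    _ ≤ (2 * L + 4) ^ 2 := by nlinarith

lemma two_pow_mul_min_one_exp_le {L b : ℝ} (hL : 0 ≤ L) (hb : 0 < b) (r : ℕ) :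
    2 ^ r * min 1 (exp (L - 2 ^ r * b)) ≤
      min (2 ^ r * b) ((2 * L + 4) ^ 2 / (2 ^ r * b)) / b := by
  rw [le_div_iff₀ hb, mul_right_comm]
  exact mul_min_one_exp_sub_le hL (by positivity)

lemma summable_two_pow_mul_min_one_exp {L b : ℝ} (hL : 0 ≤ L) (hb : 0 < b) :
    Summable fun r : ℕ => 2 ^ r * min 1 (exp (L - 2 ^ r * b)) :=
  Summable.of_nonneg_of_le (fun r => by positivity) (two_pow_mul_min_one_exp_le hL hb)
    ((summable_min_two_pow_mul hb).div_const b)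

lemma tsum_two_pow_mul_min_one_exp_le {L b : ℝ} (hL : 0 ≤ L) (hb : 0 < b) :
    ∑' r : ℕ, 2 ^ r * min 1 (exp (L - 2 ^ r * b)) ≤ 8 * (L + 2) / b :=
  calc _ ≤ ∑' r : ℕ, min (2 ^ r * b) ((2 * L + 4) ^ 2 / (2 ^ r * b)) / b :=
        Summable.tsum_le_tsum (two_pow_mul_min_one_exp_le hL hb)
          (summable_two_pow_mul_min_one_exp hL hb) ((summable_min_two_pow_mul hb).div_const b)
    _ ≤ 4 * (2 * L + 4) / b := by
        rw [tsum_div_const]; gcongr; exact tsum_min_two_pow_mul_le (by positivity) hb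
    _ = 8 * (L + 2) / b := by ring

lemma sum_le_min_one_exp_sub {ι : Type*} [Fintype ι] {B : Finset ι} {q : ι → ℝ} {c L y : ℝ}
    (hq : ∀ j, 0 ≤ q j) (hsum : ∑ j, q j ≤ 1) (hc : 0 ≤ c) (hcL : Fintype.card ι * c ≤ exp L)
    (htail : ∀ j ∈ B, q j ≤ c * exp (-y)) :
    ∑ j ∈ B, q j ≤ min 1 (exp (L - y)) := by
  refine le_min ((sum_le_sum_of_subset_of_nonneg (subset_univ B) fun j _ _ => hq j).trans hsum) ?_
  calc ∑ j ∈ B, q j ≤ #B * (c * exp (-y)) := by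
        simpa only [sum_const, nsmul_eq_mul] using sum_le_sum htail
    _ ≤ Fintype.card ι * c * exp (-y) := by
        rw [← mul_assoc]; gcongr; exact_mod_cast card_le_univ B
    _ ≤ exp (L - y) := by rw [sub_eq_add_neg, exp_add]; gcongr

lemma sum_mul_tsum_two_pow_le {ι : Type*} {B : Finset ι} {Δ : ι → ℝ} {p : ℕ → ι → ℝ}
    {D L b : ℝ} (hD : 0 ≤ D) (hL : 0 ≤ L) (hb : 0 < b) (hp : ∀ r, ∀ j ∈ B, 0 ≤ p r j)
    (hΔ : ∀ j ∈ B, Δ j ≤ D) (hpB : ∀ r, ∑ j ∈ B, p r j ≤ min 1 (exp (L - 2 ^ r * b))) :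
    ∑ j ∈ B, Δ j * ∑' r : ℕ, 2 ^ r * p r j ≤ D * (8 * (L + 2) / b) := by
  have hterm (r : ℕ) : ∀ j ∈ B, 0 ≤ 2 ^ r * p r j := fun j hj => by have := hp r j hj; positivity
  have hdom (r : ℕ) : ∑ j ∈ B, 2 ^ r * p r j ≤ 2 ^ r * min 1 (exp (L - 2 ^ r * b)) := by
    rw [← mul_sum]; gcongr; exact hpB r
  have hsum : ∀ j ∈ B, Summable fun r : ℕ => 2 ^ r * p r j := fun j hj =>
    Summable.of_nonneg_of_le (fun r => hterm r j hj)
      (fun r => (single_le_sum (hterm r) hj).trans (hdom r))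
      (summable_two_pow_mul_min_one_exp hL hb)
  calc ∑ j ∈ B, Δ j * ∑' r : ℕ, 2 ^ r * p r j ≤ ∑ j ∈ B, D * ∑' r : ℕ, 2 ^ r * p r j :=
        sum_le_sum fun j hj =>
          mul_le_mul_of_nonneg_right (hΔ j hj) (tsum_nonneg fun r => hterm r j hj)
    _ = D * ∑' r : ℕ, ∑ j ∈ B, 2 ^ r * p r j := by rw [← mul_sum, Summable.tsum_finsetSum hsum]
    _ ≤ D * ∑' r : ℕ, 2 ^ r * min 1 (exp (L - 2 ^ r * b)) :=
        mul_le_mul_of_nonneg_left (Summable.tsum_le_tsum hdom (summable_sum hsum)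
          (summable_two_pow_mul_min_one_exp hL hb)) hD
    _ ≤ D * (8 * (L + 2) / b) := by gcongr; exact tsum_two_pow_mul_min_one_exp_le hL hb

lemma sum_mul_tsum_two_pow_le_of_mem_Icc {ι : Type*} [Fintype ι] {B : Finset ι} {Δ : ι → ℝ}
    {p : ℕ → ι → ℝ} {c1 c2 a L : ℝ} (hc1 : 0 ≤ c1) (hc2 : 0 < c2) (ha : 0 < a) (hL : 0 ≤ L)
    (hp : ∀ r j, 0 ≤ p r j) (hsum : ∀ r, ∑ j, p r j ≤ 1) (hcL : Fintype.card ι * c1 ≤ exp L)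
    (hΔ : ∀ j ∈ B, Δ j ∈ Set.Icc a (2 * a))
    (htail : ∀ r, ∀ j ∈ B, p r j ≤ c1 * exp (-2 ^ (r + 1) * Δ j ^ 2 / c2)) :
    ∑ j ∈ B, Δ j * ∑' r : ℕ, 2 ^ r * p r j ≤ 8 * c2 * (L + 2) / a := by
  have hpB (r : ℕ) : ∑ j ∈ B, p r j ≤ min 1 (exp (L - 2 ^ r * (2 * a ^ 2 / c2))) := by
    refine sum_le_min_one_exp_sub (hp r) (hsum r) hc1 hcL fun j hj => (htail r j hj).trans ?_
    have : 2 ^ r * (2 * a ^ 2 / c2) = 2 ^ (r + 1) * a ^ 2 / c2 := by ring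
    rw [this, neg_mul, neg_div]
    gcongr
    exact (hΔ j hj).1
  calc _ ≤ 2 * a * (8 * (L + 2) / (2 * a ^ 2 / c2)) :=
        sum_mul_tsum_two_pow_le (by positivity) hL (by positivity) (fun r j _ => hp r j)
          (fun j hj => (hΔ j hj).2) hpB
    _ = 8 * c2 * (L + 2) / a := by field_simp

lemma sum_le_two_mul_of_sum_fiber_le {ι : Type*} (J : Finset ι) (F : ι → ℝ) (ℓ : ι → ℕ) {G : ℝ}
    (hG : 0 ≤ G) (hfiber : ∀ l, ∑ j ∈ J with ℓ j = l, F j ≤ G / 2 ^ l) :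
    ∑ j ∈ J, F j ≤ 2 * G := by
  rw [← sum_fiberwise_of_maps_to fun j hj => mem_image_of_mem ℓ hj]
  calc _ ≤ ∑ l ∈ J.image ℓ, G * (1 / 2) ^ l :=
        sum_le_sum fun l _ => by rw [one_div, inv_pow, ← div_eq_mul_inv]; exact hfiber l
    _ ≤ G * 2 := by
        rw [← mul_sum]
        exact mul_le_mul_of_nonneg_left ((summable_geometric_two.sum_le_tsum _
          fun _ _ => by positivity).trans_eq tsum_geometric_two) hG
    _ = 2 * G := mul_comm _ _

/-- The abstract grouping argument bounding the regret contribution of actions with small gaps: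
there is a constant `C` depending only on `c1, c2` such that if the selection probabilities
`p r j` sum to at most `1` over `j` and satisfy the Hoeffding-type tail bound
`p r j ≤ c1 * exp(-2^(r+1) * (Δ j)^2 / c2)` for suboptimal actions with gap at most `ε`, then
the regret contribution of those actions is at most `C * (log K + 1) / Δmin`. -/
theorem regret_small_gaps_le (c1 c2 : ℝ) (hc1 : 0 < c1) (hc2 : 0 < c2) :
    ∃ C : ℝ, 0 < C ∧
      ∀ (K : ℕ) (hK : 2 ≤ K) (ε : ℝ), 0 < ε →
        ∀ (Δ : Fin K → ℝ) (Δmin : ℝ), 0 < Δmin →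
          Δ ⟨0, by omega⟩ = 0 →
          (∀ j : Fin K, 1 ≤ (j : ℕ) → Δmin ≤ Δ j) →
          ∀ p : ℕ → Fin K → ℝ,
            (∀ r j, p r j ∈ Set.Icc (0 : ℝ) 1) →
            (∀ r : ℕ, ∑ j, p r j ≤ 1) →
            (∀ (r : ℕ) (j : Fin K), 1 ≤ (j : ℕ) → Δ j ≤ ε →
              p r j ≤ c1 * Real.exp (-(2 : ℝ) ^ (r + 1) * Δ j ^ 2 / c2)) →
            ∑ j ∈ Finset.univ.filter (fun j : Fin K => 1 ≤ (j : ℕ) ∧ Δ j ≤ ε),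
                Δ j * ∑' r : ℕ, (2 : ℝ) ^ r * p r j ≤
              C * (Real.log K + 1) / Δmin := by
  set A := log (max c1 1)
  have hA : 0 ≤ A := log_nonneg (le_max_right _ _)
  refine ⟨16 * c2 * (A + 2), by positivity, ?_⟩
  intro K hK ε _ Δ Δmin hΔmin _ hgap p hp hpsum htail
  set J := univ.filter fun j : Fin K => 1 ≤ (j : ℕ) ∧ Δ j ≤ ε
  have hlogK : 0 ≤ log K := log_nonneg (by exact_mod_cast (by omega : 1 ≤ K))
  have hKc : (Fintype.card (Fin K) : ℝ) * c1 ≤ exp (log K + A) := by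
    rw [Fintype.card_fin, exp_add, exp_log (by positivity), exp_log (by positivity)]
    gcongr
    exact le_max_left _ _
  have hbucket (j) (hj : j ∈ J) : ∃ l : ℕ, 2 ^ l ≤ Δ j / Δmin ∧ Δ j / Δmin < 2 ^ (l + 1) :=
    exists_nat_pow_near ((one_le_div hΔmin).2 (hgap j (mem_filter.1 hj).2.1)) one_lt_two
  choose! ℓ hℓ using hbucket
  refine (sum_le_two_mul_of_sum_fiber_le J _ ℓ (G := 8 * c2 * (log K + A + 2) / Δmin)
    (by positivity) fun l => ?_).trans ?_
  · rw [div_div]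
    refine sum_mul_tsum_two_pow_le_of_mem_Icc hc1.le hc2 (by positivity) (by positivity)
      (fun r j => (hp r j).1) hpsum hKc (fun j hj => ?_) fun r j hj => ?_
    all_goals obtain ⟨hjJ, rfl⟩ := mem_filter.1 hj
    · obtain ⟨hlo, hhi⟩ := hℓ j hjJ
      rw [le_div_iff₀' hΔmin] at hlo
      rw [div_lt_iff₀' hΔmin] at hhi
      exact ⟨hlo, by rw [pow_succ] at hhi; linarith⟩
    · exact htail r j (mem_filter.1 hjJ).2.1 (mem_filter.1 hjJ).2.2
  · rw [mul_div_assoc']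
    gcongr ?_ / Δmin
    nlinarith [mul_nonneg hc2.le (mul_nonneg hA hlogK)]
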